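/- arXiv:1305.6242 — 3 statements merged into one kernel-verified Lean document; each statement's English description precedes it below -/
import Mathlib

section
/- Let k be a field of characteristic 0, b ∈ k with b ≠ 0, and c₁,…,c₆ ∈ k. Set g(t) = 1 + Σ_{i=1}^{6} cᵢtⁱ and G(X₁,X₂,X₃,t) = X₁³ - bX₂³ + b²X₃³ + 3bX₁X₂X₃ - g(t). Let u ∈ k with u ≠ 0 and 54b²u³ + 5c₁³ - 18c₁c₂ + 27c₃ ≠ 0, and define p = (3c₂ - c₁²)/9, q = c₁/3, r = (-27b²u³ + 5c₁³ - 18c₁c₂ + 27c₃)/(81bu), s = u(27b²c₁u³ - 5c₁⁴ + 27c₂c₁² - 27c₃c₁ - 27c₂² + 81c₄)/(3(54b²u³ + 5c₁³ - 18c₁c₂ + 27c₃)). Then the polynomial T ↦ G(pT² + qT + 1, rT², sT² + uT, T) ∈ k[T] is divisible by T⁵ (its coefficients of T⁰, T¹, T², T³, T⁴ all vanish). -/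
/-!
Expanding the norm form along the substitution, the coefficient of `T⁰` vanishes identically and
those of `T¹, …, T⁴` are `3q - c₁`, `3p + 3q² - c₂`, `6pq + q³ + b²u³ + 3bru - c₃` and
`3p² + 3pq² + 3b²su² + 3bqru + 3brs - c₄`. This triangular system is solved successively for
`q`, `p`, `r` (the `T³` coefficient is linear in `r` with slope `3bu ≠ 0`) and `s` (the `T⁴`
coefficient is linear in `s` with slope `3b(bu² + r)`, a nonzero multiple of `hden / u`).
-/

open Polynomial

section NormFormSubstitution

variable {R : Type*} [CommRing R] (b c₁ c₂ c₃ c₄ c₅ c₆ p q r s u : R)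

theorem norm_form_substitution_eq :
    (C p * X ^ 2 + C q * X + 1) ^ 3
        - C b * (C r * X ^ 2) ^ 3
        + C b ^ 2 * (C s * X ^ 2 + C u * X) ^ 3
        + 3 * C b * (C p * X ^ 2 + C q * X + 1) * (C r * X ^ 2)
            * (C s * X ^ 2 + C u * X)
        - (1 + C c₁ * X + C c₂ * X ^ 2 + C c₃ * X ^ 3 + C c₄ * X ^ 4
            + C c₅ * X ^ 5 + C c₆ * X ^ 6) =
      C (3 * q - c₁) * X + C (3 * p + 3 * q ^ 2 - c₂) * X ^ 2
        + C (6 * p * q + q ^ 3 + b ^ 2 * u ^ 3 + 3 * b * r * u - c₃) * X ^ 3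
        + C (3 * p ^ 2 + 3 * p * q ^ 2 + 3 * b ^ 2 * s * u ^ 2 + 3 * b * q * r * u
            + 3 * b * r * s - c₄) * X ^ 4
        + X ^ 5 * (C (3 * p ^ 2 * q + 3 * b ^ 2 * s ^ 2 * u + 3 * b * p * r * u
            + 3 * b * q * r * s - c₅)
          + C (p ^ 3 - b * r ^ 3 + b ^ 2 * s ^ 3 + 3 * b * p * r * s - c₆) * X) := by
  simp only [C_add, C_sub, C_mul, C_pow, map_ofNat]
  ring

end NormFormSubstitution

theorem stmt_5 (k : Type*) [Field k] [CharZero k] (b : k) (hb : b ≠ 0)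
    (c₁ c₂ c₃ c₄ c₅ c₆ : k) (u : k) (hu : u ≠ 0)
    (hden : 54 * b ^ 2 * u ^ 3 + 5 * c₁ ^ 3 - 18 * c₁ * c₂ + 27 * c₃ ≠ 0)
    (p q r s : k)
    (hp : p = (3 * c₂ - c₁ ^ 2) / 9)
    (hq : q = c₁ / 3)
    (hr : r = (-27 * b ^ 2 * u ^ 3 + 5 * c₁ ^ 3 - 18 * c₁ * c₂ + 27 * c₃) /
      (81 * b * u))
    (hs : s = u * (27 * b ^ 2 * c₁ * u ^ 3 - 5 * c₁ ^ 4 + 27 * c₂ * c₁ ^ 2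
        - 27 * c₃ * c₁ - 27 * c₂ ^ 2 + 81 * c₄) /
      (3 * (54 * b ^ 2 * u ^ 3 + 5 * c₁ ^ 3 - 18 * c₁ * c₂ + 27 * c₃)))
    (P : k[X])
    (hP : P = (C p * X ^ 2 + C q * X + 1) ^ 3
        - C b * (C r * X ^ 2) ^ 3
        + C b ^ 2 * (C s * X ^ 2 + C u * X) ^ 3
        + 3 * C b * (C p * X ^ 2 + C q * X + 1) * (C r * X ^ 2)
            * (C s * X ^ 2 + C u * X)
        - (1 + C c₁ * X + C c₂ * X ^ 2 + C c₃ * X ^ 3 + C c₄ * X ^ 4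
            + C c₅ * X ^ 5 + C c₆ * X ^ 6)) :
    ∀ i : ℕ, i < 5 → P.coeff i = 0 := by
  have h₁ : 3 * q - c₁ = 0 := by
    rw [hq]; ring
  have h₂ : 3 * p + 3 * q ^ 2 - c₂ = 0 := by
    rw [hp, hq]; ring
  have h₃ : 6 * p * q + q ^ 3 + b ^ 2 * u ^ 3 + 3 * b * r * u - c₃ = 0 := by
    rw [hp, hq, hr]; field_simp; ring
  have h₄ : 3 * p ^ 2 + 3 * p * q ^ 2 + 3 * b ^ 2 * s * u ^ 2 + 3 * b * q * r * u
      + 3 * b * r * s - c₄ = 0 := by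
    set D := 54 * b ^ 2 * u ^ 3 + 5 * c₁ ^ 3 - 18 * c₁ * c₂ + 27 * c₃ with hD
    rw [hp, hq, hr, hs]
    field_simp
    rw [hD]
    ring
  rw [hP, norm_form_substitution_eq, h₁, h₂, h₃, h₄]
  simp only [map_zero, zero_mul, zero_add]
  exact X_pow_dvd_iff.mp (dvd_mul_right _ _)
end

section
/- Let k be a field of characteristic 0, let b, a₀, a₁, a₂ ∈ k with b ≠ 0 and a₁ ≠ 0, and let m be a positive integer. For any u ∈ k with u ≠ 0, set t = -(27b²u⁶ + 27ba₀u³ - a₂³)/(27ba₁u³), X₁ = tᵐ, X₂ = u, X₃ = a₂/(3bu). Then X₁³ - bX₂³ + b²X₃³ + 3bX₁X₂X₃ = t^{3m} + a₂tᵐ + a₁t + a₀. -/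
/-! The parameter `u` fixes `X₂`, and `X₃ = a₂ / (3bu)` is chosen so that the cross term
`3bX₁X₂X₃` of the norm form becomes `a₂X₁ = a₂tᵐ`. With `X₁ = tᵐ` the norm form is then
`t³ᵐ + a₂tᵐ + (a₂³/(27bu³) - bu³)`, so it remains to make the linear part `a₁t + a₀` equal the
constant `a₂³/(27bu³) - bu³`, which is exactly how `t` is defined. -/

section

variable {k : Type*} [Field k]

theorem twentySeven_ne_zero_of_three_ne_zero (h3 : (3 : k) ≠ 0) : (27 : k) ≠ 0 := by
  simpa [show (27 : k) = 3 ^ 3 by norm_num] using pow_ne_zero 3 h3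

/-- The norm `N_{K/k}(x + yα + zα²)` for the pure cubic extension `K = k(α)`, `α³ = -b`. -/
def pureCubicNorm (b x y z : k) : k :=
  x ^ 3 - b * y ^ 3 + b ^ 2 * z ^ 3 + 3 * b * x * y * z

theorem pureCubicNorm_div_three_mul {b u : k} (hb : b ≠ 0) (hu : u ≠ 0) (h3 : (3 : k) ≠ 0)
    (x c : k) :
    pureCubicNorm b x u (c / (3 * b * u)) = x ^ 3 + c * x + (c ^ 3 / (27 * b * u ^ 3) - b * u ^ 3) := by
  have h27 := twentySeven_ne_zero_of_three_ne_zero h3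
  unfold pureCubicNorm
  field_simp
  ring

theorem mul_param_add_eq {b a₀ a₁ a₂ u : k} (hb : b ≠ 0) (ha₁ : a₁ ≠ 0) (hu : u ≠ 0)
    (h3 : (3 : k) ≠ 0) :
    a₁ * (-(27 * b ^ 2 * u ^ 6 + 27 * b * a₀ * u ^ 3 - a₂ ^ 3) / (27 * b * a₁ * u ^ 3)) + a₀ =
      a₂ ^ 3 / (27 * b * u ^ 3) - b * u ^ 3 := by
  have h27 := twentySeven_ne_zero_of_three_ne_zero h3
  field_simp
  ring

end

theorem stmt_7_general (k : Type*) [Field k] [CharZero k] (b a₀ a₁ a₂ : k)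
    (hb : b ≠ 0) (ha₁ : a₁ ≠ 0) (m : ℕ)
    (u : k) (hu : u ≠ 0)
    (t X₁ X₂ X₃ : k)
    (ht : t = -(27 * b ^ 2 * u ^ 6 + 27 * b * a₀ * u ^ 3 - a₂ ^ 3) /
      (27 * b * a₁ * u ^ 3))
    (hX₁ : X₁ = t ^ m) (hX₂ : X₂ = u) (hX₃ : X₃ = a₂ / (3 * b * u)) :
    X₁ ^ 3 - b * X₂ ^ 3 + b ^ 2 * X₃ ^ 3 + 3 * b * X₁ * X₂ * X₃ =
      t ^ (3 * m) + a₂ * t ^ m + a₁ * t + a₀ := by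
  have h3 : (3 : k) ≠ 0 := three_ne_zero
  have hlinear := mul_param_add_eq (a₀ := a₀) (a₂ := a₂) hb ha₁ hu h3
  rw [← ht] at hlinear
  rw [hX₁, hX₂, hX₃]
  change pureCubicNorm b (t ^ m) u (a₂ / (3 * b * u)) = _
  rw [pureCubicNorm_div_three_mul hb hu h3, mul_comm 3 m, pow_mul]
  linear_combination -hlinear

theorem stmt_7 (k : Type*) [Field k] [CharZero k] (b a₀ a₁ a₂ : k)
    (hb : b ≠ 0) (ha₁ : a₁ ≠ 0) (m : ℕ) (hm : 0 < m)
    (u : k) (hu : u ≠ 0)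
    (t X₁ X₂ X₃ : k)
    (ht : t = -(27 * b ^ 2 * u ^ 6 + 27 * b * a₀ * u ^ 3 - a₂ ^ 3) /
      (27 * b * a₁ * u ^ 3))
    (hX₁ : X₁ = t ^ m) (hX₂ : X₂ = u) (hX₃ : X₃ = a₂ / (3 * b * u)) :
    X₁ ^ 3 - b * X₂ ^ 3 + b ^ 2 * X₃ ^ 3 + 3 * b * X₁ * X₂ * X₃ =
      t ^ (3 * m) + a₂ * t ^ m + a₁ * t + a₀ :=
  stmt_7_general k b a₀ a₁ a₂ hb ha₁ m u hu t X₁ X₂ X₃ ht hX₁ hX₂ hX₃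
end

section
/- Let k be a field of characteristic 0 and a, b, a₄ ∈ k with a ≠ 0. For any u ∈ k with u² ≠ 3(4a³ + 27b²), define X₂ = 4a·a₄·u / (3(4a³ + 27b²) - u²) and X₃ = a₄(12a³ + 81b² + 18bu + u²) / (a(3(4a³ + 27b²) - u²)). Then (2a²X₃ - 9bX₂)² = 4a²a₄² + 3(4a³ + 27b²)X₂². -/
/-!
Write `Δ = 4a³ + 27b²`, `D = 3Δ - u²` and `c = 2a·a₄`. Then `X₂ = 2cu / D` and
`2a²X₃ - 9bX₂ = c(3Δ + u²) / D`, so `(X₂, 2a²X₃ - 9bX₂)` is the point with slope parameter `u`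
on the conic `Y² = c² + 3Δ·X²` through `(0, c)`, and the identity is
`(3Δ + u²)² = (3Δ - u²)² + 12Δu²`.
-/

theorem sq_eq_sq_add_mul_sq_of_rational_param {K : Type*} [Field K] (c s u : K)
    (h : u ^ 2 ≠ s) :
    (c * (s + u ^ 2) / (s - u ^ 2)) ^ 2 = c ^ 2 + s * (2 * c * u / (s - u ^ 2)) ^ 2 := by
  have hD : s - u ^ 2 ≠ 0 := sub_ne_zero.mpr h.symm
  field_simp
  ring

theorem stmt_8_general (k : Type*) [Field k] (a b a₄ : k) (ha : a ≠ 0)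
    (u : k) (hu : u ^ 2 ≠ 3 * (4 * a ^ 3 + 27 * b ^ 2))
    (X₂ X₃ : k)
    (hX₂ : X₂ = 4 * a * a₄ * u / (3 * (4 * a ^ 3 + 27 * b ^ 2) - u ^ 2))
    (hX₃ : X₃ = a₄ * (12 * a ^ 3 + 81 * b ^ 2 + 18 * b * u + u ^ 2) /
      (a * (3 * (4 * a ^ 3 + 27 * b ^ 2) - u ^ 2))) :
    (2 * a ^ 2 * X₃ - 9 * b * X₂) ^ 2 =
      4 * a ^ 2 * a₄ ^ 2 + 3 * (4 * a ^ 3 + 27 * b ^ 2) * X₂ ^ 2 := by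
  set s := 3 * (4 * a ^ 3 + 27 * b ^ 2)
  have hD : s - u ^ 2 ≠ 0 := sub_ne_zero.mpr hu.symm
  have hX₂' : X₂ = 2 * (2 * a * a₄) * u / (s - u ^ 2) := by rw [hX₂]; ring
  have hY : 2 * a ^ 2 * X₃ - 9 * b * X₂ = 2 * a * a₄ * (s + u ^ 2) / (s - u ^ 2) := by
    rw [hX₂, hX₃]
    field_simp
    ring
  rw [hY, hX₂', sq_eq_sq_add_mul_sq_of_rational_param _ _ _ hu]
  ring

theorem stmt_8 (k : Type*) [Field k] [CharZero k] (a b a₄ : k) (ha : a ≠ 0)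
    (u : k) (hu : u ^ 2 ≠ 3 * (4 * a ^ 3 + 27 * b ^ 2))
    (X₂ X₃ : k)
    (hX₂ : X₂ = 4 * a * a₄ * u / (3 * (4 * a ^ 3 + 27 * b ^ 2) - u ^ 2))
    (hX₃ : X₃ = a₄ * (12 * a ^ 3 + 81 * b ^ 2 + 18 * b * u + u ^ 2) /
      (a * (3 * (4 * a ^ 3 + 27 * b ^ 2) - u ^ 2))) :
    (2 * a ^ 2 * X₃ - 9 * b * X₂) ^ 2 =
      4 * a ^ 2 * a₄ ^ 2 + 3 * (4 * a ^ 3 + 27 * b ^ 2) * X₂ ^ 2 :=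
  stmt_8_general k a b a₄ ha u hu X₂ X₃ hX₂ hX₃
end
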